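/- arXiv:2206.07856 — 7 statements merged into one kernel-verified Lean document; each statement's English description precedes it below -/
import Mathlib

section
/- Let v₁, v₂, v₃, v₄ be trace-zero 2×2 complex matrices, and for indices i₁,…,i_h set r_{i₁⋯i_h} = -tr(v_{i₁}⋯v_{i_h}). Then 2·r_{1234} = r_{13}·r_{24} - r_{12}·r_{34} - r_{14}·r_{23}. -/
/-!
Polarizing Cayley–Hamilton, traceless `2 × 2` matrices satisfy `A * B + B * A = tr (A * B) • 1`.
So two adjacent factors of a trace can be swapped at the cost of a product of shorter traces.
Swapping the neighbours `v₂ v₃`, then `v₂ v₄`, then `v₁ v₂` turns `v₁ v₂ v₃ v₄` back into itself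
with the opposite sign, which gives the identity.
-/

open Matrix

namespace Matrix

variable {R : Type*} [CommRing R]

theorem mul_add_mul_eq_trace_mul_smul_one {A B : Matrix (Fin 2) (Fin 2) R}
    (hA : trace A = 0) (hB : trace B = 0) : A * B + B * A = trace (A * B) • 1 := by
  rw [trace_fin_two, add_eq_zero_iff_eq_neg'] at hA hB
  ext i j
  fin_cases i <;> fin_cases j <;> simp [trace_fin_two, mul_apply, hA, hB] <;> ring

theorem trace_mul_mul_swap_of_trace_eq_zero (X : Matrix (Fin 2) (Fin 2) R)
    {A B : Matrix (Fin 2) (Fin 2) R} (hA : trace A = 0) (hB : trace B = 0) :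
    trace (X * (A * B)) = trace (A * B) * trace X - trace (X * (B * A)) := by
  have h := congrArg (fun M => trace (X * M)) (mul_add_mul_eq_trace_mul_smul_one hA hB)
  simp only [Matrix.mul_add, trace_add, Matrix.mul_smul, Matrix.mul_one, trace_smul,
    smul_eq_mul] at h
  exact eq_sub_of_add_eq h

theorem two_mul_trace_mul_mul_mul_of_trace_eq_zero {v₁ v₂ v₃ v₄ : Matrix (Fin 2) (Fin 2) R}
    (h₁ : trace v₁ = 0) (h₂ : trace v₂ = 0) (h₃ : trace v₃ = 0) (h₄ : trace v₄ = 0) :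
    2 * trace (v₁ * v₂ * v₃ * v₄) = trace (v₁ * v₂) * trace (v₃ * v₄)
      - trace (v₁ * v₃) * trace (v₂ * v₄) + trace (v₁ * v₄) * trace (v₂ * v₃) := by
  have swap₂₃ := trace_mul_mul_swap_of_trace_eq_zero (v₄ * v₁) h₂ h₃
  have swap₂₄ := trace_mul_mul_swap_of_trace_eq_zero (v₁ * v₃) h₂ h₄
  have swap₁₂ := trace_mul_mul_swap_of_trace_eq_zero (v₃ * v₄) h₁ h₂
  have cyc₁ : trace (v₁ * v₂ * v₃ * v₄) = trace (v₄ * v₁ * (v₂ * v₃)) := by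
    rw [trace_mul_comm _ v₄]; simp only [Matrix.mul_assoc]
  have cyc₂ : trace (v₄ * v₁ * (v₃ * v₂)) = trace (v₁ * v₃ * (v₂ * v₄)) := by
    rw [Matrix.mul_assoc, trace_mul_comm v₄]; simp only [Matrix.mul_assoc]
  have cyc₃ : trace (v₁ * v₃ * (v₄ * v₂)) = trace (v₃ * v₄ * (v₂ * v₁)) := by
    rw [Matrix.mul_assoc, trace_mul_comm v₁]; simp only [Matrix.mul_assoc]
  have cyc₄ : trace (v₃ * v₄ * (v₁ * v₂)) = trace (v₁ * v₂ * v₃ * v₄) := by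
    rw [trace_mul_comm (v₃ * v₄)]; simp only [Matrix.mul_assoc]
  rw [trace_mul_comm v₄ v₁] at swap₂₃
  linear_combination cyc₁ + swap₂₃ - cyc₂ - swap₂₄ + cyc₃ + swap₁₂ - cyc₄

end Matrix

theorem stmt_4 (v₁ v₂ v₃ v₄ : Matrix (Fin 2) (Fin 2) ℂ)
    (h₁ : trace v₁ = 0) (h₂ : trace v₂ = 0) (h₃ : trace v₃ = 0) (h₄ : trace v₄ = 0) :
    2 * (-(trace (v₁ * v₂ * v₃ * v₄))) =
      (-(trace (v₁ * v₃))) * (-(trace (v₂ * v₄)))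
        - (-(trace (v₁ * v₂))) * (-(trace (v₃ * v₄)))
        - (-(trace (v₁ * v₄))) * (-(trace (v₂ * v₃))) := by
  linear_combination -two_mul_trace_mul_mul_mul_of_trace_eq_zero h₁ h₂ h₃ h₄
end

section
/- Let v₁, v₂, v₃, v₄ be trace-zero 2×2 complex matrices, and set r_{ij} = -tr(v_i v_j), r_{ijk} = -tr(v_i v_j v_k). Then r_{123}•v₄ - r_{13}•(v₂*v₄) + r_{12}•(v₃*v₄) = r_{234}•v₁ + r_{34}•(v₁*v₂) - r_{24}•(v₁*v₃) as 2×2 matrices. -/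
/-!
For traceless `A, B, C ∈ sl₂`, the Pauli-matrix identity
`σₐσ_bσ_c = δ_ab σ_c - δ_ac σ_b + δ_bc σ_a + i ε_abc` reads
`2 ABC = tr(AB) C - tr(AC) B + tr(BC) A + tr(ABC) I`.
Expanding `2 v₁v₂v₃v₄` once as `(2 v₁v₂v₃) v₄` and once as `v₁ (2 v₂v₃v₄)` gives two
expressions sharing the term `tr(v₂v₃) v₁v₄`; their difference is the identity.
-/

open Matrix

theorem Matrix.two_smul_mul_mul_of_trace_eq_zero {R : Type*} [CommRing R]
    {A B C : Matrix (Fin 2) (Fin 2) R} (hA : trace A = 0) (hB : trace B = 0)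
    (hC : trace C = 0) :
    (2 : R) • (A * B * C) =
      trace (A * B) • C - trace (A * C) • B + trace (B * C) • A + trace (A * B * C) • 1 := by
  rw [trace_fin_two] at hA hB hC
  have hA' : A 1 1 = -A 0 0 := eq_neg_of_add_eq_zero_right hA
  have hB' : B 1 1 = -B 0 0 := eq_neg_of_add_eq_zero_right hB
  have hC' : C 1 1 = -C 0 0 := eq_neg_of_add_eq_zero_right hC
  ext i j
  fin_cases i <;> fin_cases j <;>
    simp [mul_apply, trace_fin_two, Fin.sum_univ_two, hA', hB', hC'] <;> ring

theorem stmt_5 (v₁ v₂ v₃ v₄ : Matrix (Fin 2) (Fin 2) ℂ)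
    (h₁ : trace v₁ = 0) (h₂ : trace v₂ = 0) (h₃ : trace v₃ = 0) (h₄ : trace v₄ = 0) :
    (-(trace (v₁ * v₂ * v₃))) • v₄ - (-(trace (v₁ * v₃))) • (v₂ * v₄)
        + (-(trace (v₁ * v₂))) • (v₃ * v₄) =
      (-(trace (v₂ * v₃ * v₄))) • v₁ + (-(trace (v₃ * v₄))) • (v₁ * v₂)
        - (-(trace (v₂ * v₄))) • (v₁ * v₃) := by
  have h₁₂₃ := congrArg (· * v₄) (two_smul_mul_mul_of_trace_eq_zero h₁ h₂ h₃)
  have h₂₃₄ := congrArg (v₁ * ·) (two_smul_mul_mul_of_trace_eq_zero h₂ h₃ h₄)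
  simp only [add_mul, sub_mul, smul_mul_assoc, one_mul] at h₁₂₃
  simp only [mul_add, mul_sub, mul_smul_comm, mul_one] at h₂₃₄
  rw [show v₁ * (v₂ * v₃ * v₄) = v₁ * v₂ * v₃ * v₄ by simp only [Matrix.mul_assoc]] at h₂₃₄
  linear_combination (norm := module) h₁₂₃ - h₂₃₄
end

section
/- Let v₁,…,v₅ be trace-zero 2×2 complex matrices and r_{i₁⋯i_h} = -tr(v_{i₁}⋯v_{i_h}). Then r_{45}·r_{123} - r_{13}·r_{245} + r_{12}·r_{345} = r_{15}·r_{234} + r_{34}·r_{125} - r_{24}·r_{135}. -/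
/-!
Identify the traceless `2 × 2` matrices with a three-dimensional space: there `tr (x y)` is a
symmetric bilinear form and `tr (x y z)` is an alternating trilinear form, i.e. a multiple of the
determinant. For four vectors `a, b, c, d` of a three-dimensional space Cramer's rule gives
`det(b,c,d) a - det(a,c,d) b + det(a,b,d) c - det(a,b,c) d = 0`; pairing with a fifth vector `e`
yields a four-term trace identity. The theorem is the difference of two instances of it, one
paired with `v₁` and one paired with `v₄`.
-/

open Matrix

namespace Matrix

variable {R : Type*} [CommRing R]

theorem eq_of_trace_eq_zero_fin_two {A : Matrix (Fin 2) (Fin 2) R} (hA : trace A = 0) :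
    A = !![A 0 0, A 0 1; A 1 0, -A 0 0] := by
  rw [trace_fin_two, add_eq_zero_iff_eq_neg'] at hA
  rw [← hA]
  exact eta_fin_two A

theorem trace_mul_trace_mul_mul_cramer_fin_two {a b c d e : Matrix (Fin 2) (Fin 2) R}
    (ha : trace a = 0) (hb : trace b = 0) (hc : trace c = 0) (hd : trace d = 0)
    (he : trace e = 0) :
    trace (e * a) * trace (b * c * d) - trace (e * b) * trace (a * c * d)
      + trace (e * c) * trace (a * b * d) - trace (e * d) * trace (a * b * c) = 0 := by
  rw [eq_of_trace_eq_zero_fin_two ha, eq_of_trace_eq_zero_fin_two hb,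
    eq_of_trace_eq_zero_fin_two hc, eq_of_trace_eq_zero_fin_two hd,
    eq_of_trace_eq_zero_fin_two he]
  simp only [mul_fin_two, trace_fin_two, of_apply, cons_val', cons_val_zero, cons_val_one,
    empty_val', cons_val_fin_one]
  ring

end Matrix

theorem stmt_6 (v₁ v₂ v₃ v₄ v₅ : Matrix (Fin 2) (Fin 2) ℂ)
    (h₁ : trace v₁ = 0) (h₂ : trace v₂ = 0) (h₃ : trace v₃ = 0) (h₄ : trace v₄ = 0)
    (h₅ : trace v₅ = 0) :
    (-(trace (v₄ * v₅))) * (-(trace (v₁ * v₂ * v₃)))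
        - (-(trace (v₁ * v₃))) * (-(trace (v₂ * v₄ * v₅)))
        + (-(trace (v₁ * v₂))) * (-(trace (v₃ * v₄ * v₅))) =
      (-(trace (v₁ * v₅))) * (-(trace (v₂ * v₃ * v₄)))
        + (-(trace (v₃ * v₄))) * (-(trace (v₁ * v₂ * v₅)))
        - (-(trace (v₂ * v₄))) * (-(trace (v₁ * v₃ * v₅))) := by
  have paired_v₁ := trace_mul_trace_mul_mul_cramer_fin_two h₂ h₃ h₄ h₅ h₁
  have paired_v₄ := trace_mul_trace_mul_mul_cramer_fin_two h₁ h₂ h₃ h₅ h₄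
  rw [trace_mul_comm v₄ v₁, trace_mul_comm v₄ v₂, trace_mul_comm v₄ v₃] at paired_v₄
  linear_combination paired_v₁ - paired_v₄
end

section
/- Let v₁,…,v₆ be trace-zero 2×2 complex matrices and r_{i₁⋯i_h} = -tr(v_{i₁}⋯v_{i_h}). Then 2·(r_{156}·r_{234} - r_{123}·r_{456}) = r_{16}·(r_{25}·r_{34} - r_{24}·r_{35}) + r_{26}·(r_{13}·r_{45} - r_{15}·r_{34}) + r_{36}·(r_{15}·r_{24} - r_{12}·r_{45}) + r_{46}·(r_{12}·r_{35} - r_{13}·r_{25}). -/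
/-!
On the three-dimensional space of traceless `2 × 2` matrices, `r_{ij}` is a symmetric bilinear
form and `r_{ijk}` is alternating (`AB + BA = tr(AB) • 1` gives `tr(ABC) = ½ tr([A, B] C)`), so
the identity is a relation between such forms. It is checked in coordinates: a traceless matrix
is `!![a, b; c, -a]`, and both sides become the same polynomial in the eighteen entries.
-/

open Matrix

theorem Matrix.eq_of_fin_two_of_trace_eq_zero {R : Type*} [Ring R]
    {A : Matrix (Fin 2) (Fin 2) R} (hA : trace A = 0) :
    A = !![A 0 0, A 0 1; A 1 0, -A 0 0] := by
  rw [trace_fin_two, add_eq_zero_iff_eq_neg'] at hA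
  rw [← hA]
  exact eta_fin_two A

theorem stmt_7 (v₁ v₂ v₃ v₄ v₅ v₆ : Matrix (Fin 2) (Fin 2) ℂ)
    (h₁ : trace v₁ = 0) (h₂ : trace v₂ = 0) (h₃ : trace v₃ = 0) (h₄ : trace v₄ = 0)
    (h₅ : trace v₅ = 0) (h₆ : trace v₆ = 0) :
    2 * ((-(trace (v₁ * v₅ * v₆))) * (-(trace (v₂ * v₃ * v₄)))
          - (-(trace (v₁ * v₂ * v₃))) * (-(trace (v₄ * v₅ * v₆)))) =
      (-(trace (v₁ * v₆))) * ((-(trace (v₂ * v₅))) * (-(trace (v₃ * v₄)))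
            - (-(trace (v₂ * v₄))) * (-(trace (v₃ * v₅))))
        + (-(trace (v₂ * v₆))) * ((-(trace (v₁ * v₃))) * (-(trace (v₄ * v₅)))
            - (-(trace (v₁ * v₅))) * (-(trace (v₃ * v₄))))
        + (-(trace (v₃ * v₆))) * ((-(trace (v₁ * v₅))) * (-(trace (v₂ * v₄)))
            - (-(trace (v₁ * v₂))) * (-(trace (v₄ * v₅))))
        + (-(trace (v₄ * v₆))) * ((-(trace (v₁ * v₂))) * (-(trace (v₃ * v₅)))
            - (-(trace (v₁ * v₃))) * (-(trace (v₂ * v₅)))) := by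
  rw [eq_of_fin_two_of_trace_eq_zero h₁, eq_of_fin_two_of_trace_eq_zero h₂,
    eq_of_fin_two_of_trace_eq_zero h₃, eq_of_fin_two_of_trace_eq_zero h₄,
    eq_of_fin_two_of_trace_eq_zero h₅, eq_of_fin_two_of_trace_eq_zero h₆]
  simp only [mul_fin_two, trace_fin_two_of]
  ring
end

section
/- Let x₁,…,x₆ ∈ SL(2,ℂ) and define the checked matrices x̌ᵢ = xᵢ - (tr(xᵢ)/2)•1 and s_{i₁⋯i_r} = -tr(x̌_{i₁}⋯x̌_{i_r}). Then for any indices a₁ < a₂ < a₃ and b₁ < b₂ < b₃ (drawn from 1,…,6), 2·s_{a₁a₂a₃}·s_{b₁b₂b₃} equals the determinant of the 3×3 matrix whose (i,j) entry is s_{a_i b_j}. (Type I relation.) -/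
/-!
Traceless `2 × 2` matrices form a three-dimensional space with coordinates `(A₀₀, A₀₁, A₁₀)`.
In these coordinates `tr (A B C)` is the determinant of the coordinate vectors (it is trilinear
and alternating, since `A² = -det A • 1` by Cayley–Hamilton) and `-tr (A B)` is a bilinear form
with Gram matrix `G` of determinant `2`. Hence the matrix of the `-tr (aᵢ bⱼ)` factors as
`P G Qᵀ`, with `P`, `Q` the coordinate matrices of the `aᵢ` and `bⱼ`, and its determinant is
`2 · det P · det Q = 2 · tr (a₁ a₂ a₃) · tr (b₁ b₂ b₃)`.
-/

open Matrix

section Traceless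

variable {R : Type*} [CommRing R]

def tracelessCoords (A : Matrix (Fin 2) (Fin 2) R) : Fin 3 → R :=
  ![A 0 0, A 0 1, A 1 0]

def traceFormGram : Matrix (Fin 3) (Fin 3) R :=
  !![-2, 0, 0; 0, 0, -1; 0, -1, 0]

lemma det_traceFormGram : (traceFormGram : Matrix (Fin 3) (Fin 3) R).det = 2 := by
  simp [traceFormGram, det_fin_three]

lemma apply_one_one_of_trace_eq_zero {A : Matrix (Fin 2) (Fin 2) R} (hA : trace A = 0) :
    A 1 1 = -A 0 0 := by
  rw [trace_fin_two] at hA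
  linear_combination hA

lemma trace_mul_mul_eq_det_tracelessCoords (u : Fin 3 → Matrix (Fin 2) (Fin 2) R)
    (hu : ∀ i, trace (u i) = 0) :
    trace (u 0 * u 1 * u 2) = (of fun i => tracelessCoords (u i)).det := by
  have h := fun i => apply_one_one_of_trace_eq_zero (hu i)
  simp only [trace_fin_two, mul_apply, Fin.sum_univ_two, h, tracelessCoords, det_fin_three,
    of_apply, cons_val_zero, cons_val_one, cons_val]
  ring

lemma neg_trace_mul_eq_dotProduct {A B : Matrix (Fin 2) (Fin 2) R}
    (hA : trace A = 0) (hB : trace B = 0) :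
    -trace (A * B) = tracelessCoords A ⬝ᵥ (traceFormGram *ᵥ tracelessCoords B) := by
  simp only [trace_fin_two, mul_apply, Fin.sum_univ_two, Fin.sum_univ_three, dotProduct, mulVec,
    tracelessCoords, traceFormGram, of_apply, cons_val', cons_val_fin_one, cons_val_zero,
    cons_val_one, cons_val, apply_one_one_of_trace_eq_zero hA, apply_one_one_of_trace_eq_zero hB]
  ring

lemma det_neg_trace_mul (u v : Fin 3 → Matrix (Fin 2) (Fin 2) R)
    (hu : ∀ i, trace (u i) = 0) (hv : ∀ j, trace (v j) = 0) :
    (of fun i j => -trace (u i * v j)).det =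
      2 * -trace (u 0 * u 1 * u 2) * -trace (v 0 * v 1 * v 2) := by
  set P : Matrix (Fin 3) (Fin 3) R := of fun i => tracelessCoords (u i)
  set Q : Matrix (Fin 3) (Fin 3) R := of fun j => tracelessCoords (v j)
  have hfactor : (of fun i j => -trace (u i * v j)) = P * traceFormGram * Qᵀ := by
    ext i j
    rw [mul_mul_apply, transpose_transpose]
    exact neg_trace_mul_eq_dotProduct (hu i) (hv j)
  rw [hfactor, det_mul, det_mul, det_transpose, det_traceFormGram,
    trace_mul_mul_eq_det_tracelessCoords u hu, trace_mul_mul_eq_det_tracelessCoords v hv]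
  ring

end Traceless

lemma trace_sub_half_trace_smul_one {K : Type*} [Field K] [NeZero (2 : K)]
    (A : Matrix (Fin 2) (Fin 2) K) :
    trace (A - (trace A / 2) • (1 : Matrix (Fin 2) (Fin 2) K)) = 0 := by
  rw [trace_sub, trace_smul, trace_one, Fintype.card_fin, smul_eq_mul, Nat.cast_ofNat,
    div_mul_cancel₀ _ two_ne_zero, sub_self]

theorem stmt_8_general (x : Fin 6 → Matrix (Fin 2) (Fin 2) ℂ)
    (c : Fin 6 → Matrix (Fin 2) (Fin 2) ℂ)
    (hc : ∀ i, c i = x i - ((trace (x i)) / 2) • (1 : Matrix (Fin 2) (Fin 2) ℂ))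
    (a₁ a₂ a₃ b₁ b₂ b₃ : Fin 6) :
    2 * (-(trace (c a₁ * c a₂ * c a₃))) * (-(trace (c b₁ * c b₂ * c b₃))) =
      (!![-(trace (c a₁ * c b₁)), -(trace (c a₁ * c b₂)), -(trace (c a₁ * c b₃));
          -(trace (c a₂ * c b₁)), -(trace (c a₂ * c b₂)), -(trace (c a₂ * c b₃));
          -(trace (c a₃ * c b₁)), -(trace (c a₃ * c b₂)), -(trace (c a₃ * c b₃))] :
          Matrix (Fin 3) (Fin 3) ℂ).det := by
  have htraceless : ∀ i, trace (c i) = 0 := fun i => hc i ▸ trace_sub_half_trace_smul_one (x i)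
  have hdet := det_neg_trace_mul ![c a₁, c a₂, c a₃] ![c b₁, c b₂, c b₃]
    (fun i => by fin_cases i <;> exact htraceless _)
    (fun j => by fin_cases j <;> exact htraceless _)
  refine hdet.symm.trans (congrArg det ?_)
  ext i j
  fin_cases i <;> fin_cases j <;> rfl

theorem stmt_8 (x : Fin 6 → Matrix (Fin 2) (Fin 2) ℂ)
    (hx : ∀ i, (x i).det = 1)
    (c : Fin 6 → Matrix (Fin 2) (Fin 2) ℂ)
    (hc : ∀ i, c i = x i - ((trace (x i)) / 2) • (1 : Matrix (Fin 2) (Fin 2) ℂ))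
    (a₁ a₂ a₃ b₁ b₂ b₃ : Fin 6)
    (ha₁ : a₁ < a₂) (ha₂ : a₂ < a₃) (hb₁ : b₁ < b₂) (hb₂ : b₂ < b₃) :
    2 * (-(trace (c a₁ * c a₂ * c a₃))) * (-(trace (c b₁ * c b₂ * c b₃))) =
      (!![-(trace (c a₁ * c b₁)), -(trace (c a₁ * c b₂)), -(trace (c a₁ * c b₃));
          -(trace (c a₂ * c b₁)), -(trace (c a₂ * c b₂)), -(trace (c a₂ * c b₃));
          -(trace (c a₃ * c b₁)), -(trace (c a₃ * c b₂)), -(trace (c a₃ * c b₃))] :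
          Matrix (Fin 3) (Fin 3) ℂ).det :=
  stmt_8_general x c hc a₁ a₂ a₃ b₁ b₂ b₃
end

section
/- Let v₁,…,v₆ be trace-zero 2×2 complex matrices and r_{i₁⋯i_h} = -tr(v_{i₁}⋯v_{i_h}). Then 2·(r_{256}·r_{134} + r_{123}·r_{456}) = r_{26}·(r_{15}·r_{34} - r_{14}·r_{35}) + r_{16}·(r_{23}·r_{45} - r_{25}·r_{34}) + r_{36}·(r_{25}·r_{14} - r_{12}·r_{45}) + r_{46}·(r_{12}·r_{35} - r_{23}·r_{15}). -/
open Matrix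

lemma Matrix.eq_of_trace_eq_zero_fin_two_s14 {R : Type*} [CommRing R] {v : Matrix (Fin 2) (Fin 2) R}
    (h : trace v = 0) : v = !![v 0 0, v 0 1; v 1 0, -v 0 0] := by
  rw [trace_fin_two, add_eq_zero_iff_eq_neg'] at h
  rw [← h]
  exact eta_fin_two v

theorem Matrix.trace_identity_of_trace_eq_zero_fin_two {R : Type*} [CommRing R]
    {v₁ v₂ v₃ v₄ v₅ v₆ : Matrix (Fin 2) (Fin 2) R}
    (h₁ : trace v₁ = 0) (h₂ : trace v₂ = 0) (h₃ : trace v₃ = 0) (h₄ : trace v₄ = 0)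
    (h₅ : trace v₅ = 0) (h₆ : trace v₆ = 0) :
    2 * (trace (v₂ * v₅ * v₆) * trace (v₁ * v₃ * v₄)
        + trace (v₁ * v₂ * v₃) * trace (v₄ * v₅ * v₆)) =
      -(trace (v₂ * v₆) * (trace (v₁ * v₅) * trace (v₃ * v₄) - trace (v₁ * v₄) * trace (v₃ * v₅))
        + trace (v₁ * v₆) * (trace (v₂ * v₃) * trace (v₄ * v₅) - trace (v₂ * v₅) * trace (v₃ * v₄))
        + trace (v₃ * v₆) * (trace (v₂ * v₅) * trace (v₁ * v₄) - trace (v₁ * v₂) * trace (v₄ * v₅))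
        + trace (v₄ * v₆) * (trace (v₁ * v₂) * trace (v₃ * v₅) - trace (v₂ * v₃) * trace (v₁ * v₅))) := by
  rw [eq_of_trace_eq_zero_fin_two_s14 h₁, eq_of_trace_eq_zero_fin_two_s14 h₂,
    eq_of_trace_eq_zero_fin_two_s14 h₃, eq_of_trace_eq_zero_fin_two_s14 h₄,
    eq_of_trace_eq_zero_fin_two_s14 h₅, eq_of_trace_eq_zero_fin_two_s14 h₆]
  simp only [mul_fin_two, trace_fin_two_of]
  ring

theorem stmt_14 (v₁ v₂ v₃ v₄ v₅ v₆ : Matrix (Fin 2) (Fin 2) ℂ)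
    (h₁ : trace v₁ = 0) (h₂ : trace v₂ = 0) (h₃ : trace v₃ = 0) (h₄ : trace v₄ = 0)
    (h₅ : trace v₅ = 0) (h₆ : trace v₆ = 0) :
    2 * ((-(trace (v₂ * v₅ * v₆))) * (-(trace (v₁ * v₃ * v₄)))
          + (-(trace (v₁ * v₂ * v₃))) * (-(trace (v₄ * v₅ * v₆)))) =
      (-(trace (v₂ * v₆))) * ((-(trace (v₁ * v₅))) * (-(trace (v₃ * v₄)))
            - (-(trace (v₁ * v₄))) * (-(trace (v₃ * v₅))))
        + (-(trace (v₁ * v₆))) * ((-(trace (v₂ * v₃))) * (-(trace (v₄ * v₅)))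
            - (-(trace (v₂ * v₅))) * (-(trace (v₃ * v₄))))
        + (-(trace (v₃ * v₆))) * ((-(trace (v₂ * v₅))) * (-(trace (v₁ * v₄)))
            - (-(trace (v₁ * v₂))) * (-(trace (v₄ * v₅))))
        + (-(trace (v₄ * v₆))) * ((-(trace (v₁ * v₂))) * (-(trace (v₃ * v₅)))
            - (-(trace (v₂ * v₃))) * (-(trace (v₁ * v₅)))) := by
  linear_combination trace_identity_of_trace_eq_zero_fin_two h₁ h₂ h₃ h₄ h₅ h₆
end

section
/- Let v₁,…,v₄ be trace-zero 2×2 complex matrices and r_{i₁⋯i_h} = -tr(v_{i₁}⋯v_{i_h}). Then 2•(v₁*v₂*v₃)*v₄ = -(r_{23}•(v₁*v₄) - r_{13}•(v₂*v₄) + r_{12}•(v₃*v₄) + r_{123}•v₄). -/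
/-!
Polarising the Cayley–Hamilton identity of `2 × 2` matrices gives
`M N + N M = tr M • N + tr N • M + (tr (M N) - tr M tr N) • 1`. For trace-zero `a, b` this says
`a b + b a = tr (a b) • 1`, which moves `a` past `b c` in two swaps:
`a b c = tr (b c) • a - tr (a c) • b + c a b`; with `M = a b`, `N = c` it also gives
`a b c + c a b = tr (a b) • c + tr (a b c) • 1`. Adding the two eliminates `c a b`, and
multiplying on the right by `v₄` yields the theorem.
-/

open Matrix

namespace Matrix

variable {R : Type*} [CommRing R]

theorem mul_add_mul_comm_fin_two (M N : Matrix (Fin 2) (Fin 2) R) :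
    M * N + N * M = trace M • N + trace N • M + (trace (M * N) - trace M * trace N) • 1 := by
  ext i j
  fin_cases i <;> fin_cases j <;>
    simp [mul_apply, Fin.sum_univ_two, trace_fin_two] <;> ring

theorem mul_add_mul_comm_of_trace_eq_zero {a b : Matrix (Fin 2) (Fin 2) R}
    (ha : trace a = 0) (hb : trace b = 0) : a * b + b * a = trace (a * b) • 1 := by
  simpa [ha, hb] using mul_add_mul_comm_fin_two a b

theorem two_smul_mul_mul_of_trace_eq_zero_s15 {a b c : Matrix (Fin 2) (Fin 2) R}
    (ha : trace a = 0) (hb : trace b = 0) (hc : trace c = 0) :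
    (2 : R) • (a * b * c) =
      trace (b * c) • a - trace (a * c) • b + trace (a * b) • c + trace (a * b * c) • 1 := by
  have hbc := mul_add_mul_comm_of_trace_eq_zero hb hc
  have hac := mul_add_mul_comm_of_trace_eq_zero ha hc
  have swap : a * b * c = trace (b * c) • a - trace (a * c) • b + c * a * b := by
    calc a * b * c = a * (b * c + c * b) - (a * c + c * a) * b + c * a * b := by noncomm_ring
      _ = _ := by rw [hbc, hac]; simp [sub_eq_add_neg]
  have cyclic : a * b * c + c * (a * b) = trace (a * b) • c + trace (a * b * c) • 1 := by
    simpa [hc] using mul_add_mul_comm_fin_two (a * b) c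
  calc (2 : R) • (a * b * c) = a * b * c + a * b * c := two_smul R _
    _ = (trace (b * c) • a - trace (a * c) • b + c * a * b)
          + (trace (a * b) • c + trace (a * b * c) • 1 - c * (a * b)) :=
        congrArg₂ (· + ·) swap (eq_sub_of_add_eq cyclic)
    _ = _ := by rw [mul_assoc c]; abel

end Matrix

theorem stmt_15_general (v₁ v₂ v₃ v₄ : Matrix (Fin 2) (Fin 2) ℂ)
    (h₁ : trace v₁ = 0) (h₂ : trace v₂ = 0) (h₃ : trace v₃ = 0) :
    (2 : ℂ) • (v₁ * v₂ * v₃ * v₄) =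
      -((-(trace (v₂ * v₃))) • (v₁ * v₄) - (-(trace (v₁ * v₃))) • (v₂ * v₄)
          + (-(trace (v₁ * v₂))) • (v₃ * v₄)
          + (-(trace (v₁ * v₂ * v₃))) • v₄) := by
  have h := congrArg (· * v₄) (two_smul_mul_mul_of_trace_eq_zero_s15 h₁ h₂ h₃)
  simp only [smul_mul_assoc, add_mul, sub_mul, one_mul] at h
  rw [h]
  simp only [neg_smul]
  abel

theorem stmt_15 (v₁ v₂ v₃ v₄ : Matrix (Fin 2) (Fin 2) ℂ)
    (h₁ : trace v₁ = 0) (h₂ : trace v₂ = 0) (h₃ : trace v₃ = 0) (h₄ : trace v₄ = 0) :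
    (2 : ℂ) • (v₁ * v₂ * v₃ * v₄) =
      -((-(trace (v₂ * v₃))) • (v₁ * v₄) - (-(trace (v₁ * v₃))) • (v₂ * v₄)
          + (-(trace (v₁ * v₂))) • (v₃ * v₄)
          + (-(trace (v₁ * v₂ * v₃))) • v₄) :=
  stmt_15_general v₁ v₂ v₃ v₄ h₁ h₂ h₃
end
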